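/- arXiv:2605.10741 — 4 statements merged into one kernel-verified Lean document; each statement's English description precedes it below -/
import Mathlib

section
/- Noiseless estimation bound: if Y = W*X with rank(W*) = r* and σ_min(X) > 0, then after L rounds of parallel rank-1 deflation with r components, ‖W* - Σ_{k=1}^r b_{k,L} a_{k,L}ᵀ‖_F ≤ (1/σ_min(X)) ( Σ_{k=r+1}^{r*} σ_k* + Σ_{k=1}^r G_{k,L} ), where σ_k* denotes the k-th singular value of Y = W*X. -/
open Matrix

/-- Euclidean norm of a real vector. -/
noncomputable def euclNorm {n : ℕ} (x : Fin n → ℝ) : ℝ :=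
  Real.sqrt (∑ i, x i ^ 2)

/-- Frobenius norm of a real matrix. -/
noncomputable def frobNorm {m n : ℕ} (A : Matrix (Fin m) (Fin n) ℝ) : ℝ :=
  Real.sqrt (∑ i, ∑ j, A i j ^ 2)

/-!
Since `σ_min(X) > 0`, right multiplication by `X` is bounded below in Frobenius norm,
`σ_min ‖E‖_F ≤ ‖E X‖_F`, so it is enough to bound the residual after multiplying by `X`.
As `W* X = Y`, splitting the SVD of `Y` at `r` gives
  `(W* - Σ_{k≤r} b_k a_kᵀ) X = Σ_{k>r} σ_k u_k v_kᵀ - Σ_{k≤r} (b_k a_kᵀ X - b_k* a_k*ᵀ X)`,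
and the triangle inequality finishes, as `‖σ_k u_k v_kᵀ‖_F = σ_k` for unit `u_k`, `v_k`.
-/

open WithLp
open scoped Matrix.Norms.Frobenius

namespace Matrix

variable {l m n α : Type*} [Fintype l] [Fintype m] [Fintype n]

theorem frobenius_norm_sq_eq_sum_row [SeminormedAddCommGroup α] (A : Matrix l m α) :
    ‖A‖ ^ 2 = ∑ i, ‖toLp 2 (A i)‖ ^ 2 :=
  PiLp.norm_sq_eq_of_L2 _ (toLp 2 fun i => toLp 2 (A i))

theorem frobenius_norm_vecMulVec [SeminormedRing α] [NormMulClass α]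
    (x : m → α) (y : n → α) : ‖vecMulVec x y‖ = ‖toLp 2 x‖ * ‖toLp 2 y‖ := by
  have hrow : ∀ i, ‖toLp 2 (vecMulVec x y i)‖ = ‖x i‖ * ‖toLp 2 y‖ := fun i => by
    rw [← norm_smul]; rfl
  rw [← sq_eq_sq₀ (norm_nonneg _) (by positivity), frobenius_norm_sq_eq_sum_row, mul_pow,
    PiLp.norm_sq_eq_of_L2 _ (toLp 2 x), Finset.sum_mul]
  simp only [hrow, mul_pow]

theorem mul_frobenius_norm_le_frobenius_norm_mul [SeminormedRing α] {c : ℝ} (hc : 0 ≤ c)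
    {X : Matrix m n α} (hX : ∀ w : m → α, c * ‖toLp 2 w‖ ≤ ‖toLp 2 (w ᵥ* X)‖)
    (A : Matrix l m α) : c * ‖A‖ ≤ ‖A * X‖ := by
  rw [← pow_le_pow_iff_left₀ (by positivity) (norm_nonneg _) two_ne_zero, mul_pow,
    frobenius_norm_sq_eq_sum_row, frobenius_norm_sq_eq_sum_row, Finset.mul_sum]
  gcongr with i
  rw [← mul_pow, mul_apply_eq_vecMul]
  exact pow_le_pow_left₀ (by positivity) (hX (A i)) 2

end Matrix

theorem EuclideanSpace.norm_toLp_eq_one_of_dotProduct_self {n : Type*} [Fintype n] {x : n → ℝ}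
    (hx : x ⬝ᵥ x = 1) : ‖toLp 2 x‖ = 1 := by
  rw [← pow_eq_one_iff_of_nonneg (norm_nonneg _) two_ne_zero, EuclideanSpace.real_norm_sq_eq,
    ← hx]
  simp only [dotProduct, sq]

theorem Finset.sum_Icc_one_add_sum_Icc_succ {M : Type*} [AddCommMonoid M] (f : ℕ → M)
    {b c : ℕ} (hbc : b ≤ c) :
    ∑ k ∈ Icc 1 b, f k + ∑ k ∈ Icc (b + 1) c, f k = ∑ k ∈ Icc 1 c, f k := by
  simpa only [← Finset.Icc_add_one_left_eq_Ioc, zero_add]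
    using Finset.sum_Ioc_consecutive f (Nat.zero_le b) hbc

theorem euclNorm_eq_norm {n : ℕ} (x : Fin n → ℝ) : euclNorm x = ‖toLp 2 x‖ := by
  simp [euclNorm, EuclideanSpace.norm_eq]

theorem frobNorm_eq_norm {m n : ℕ} (A : Matrix (Fin m) (Fin n) ℝ) : frobNorm A = ‖A‖ := by
  simp [frobNorm, frobenius_norm_def, Real.sqrt_eq_rpow]

theorem noiseless_estimation_bound_general
    (m d n r rstar : ℕ) (hr : r ≤ rstar)
    (X : Matrix (Fin d) (Fin n) ℝ) (Wstar : Matrix (Fin m) (Fin d) ℝ)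
    (σmin : ℝ) (σ : ℕ → ℝ) (u : ℕ → Fin m → ℝ) (v : ℕ → Fin n → ℝ)
    (a : ℕ → Fin d → ℝ) (b : ℕ → Fin m → ℝ)          -- iterates (a_{k,L}, b_{k,L})
    (astar : ℕ → Fin d → ℝ) (bstar : ℕ → Fin m → ℝ)  -- ideal components
    -- smallest singular value of X is positive
    (hσmin0 : 0 < σmin)
    (hσminX : ∀ w : Fin d → ℝ, σmin * euclNorm w ≤ euclNorm (Matrix.vecMul w X))
    -- SVD of Y = W*X exhibiting rank(W*X) = r*
    (hSVD : Wstar * X = ∑ k ∈ Finset.Icc 1 rstar, σ k • Matrix.vecMulVec (u k) (v k))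
    (hσpos : ∀ k ∈ Finset.Icc 1 rstar, 0 < σ k)
    (huon : ∀ j ∈ Finset.Icc 1 rstar, ∀ k ∈ Finset.Icc 1 rstar,
      dotProduct (u j) (u k) = if j = k then 1 else 0)
    (hvon : ∀ j ∈ Finset.Icc 1 rstar, ∀ k ∈ Finset.Icc 1 rstar,
      dotProduct (v j) (v k) = if j = k then 1 else 0)
    -- the ideal components are the leading singular components of Y
    (hstar : ∀ k ∈ Finset.Icc 1 r,
      Matrix.vecMulVec (bstar k) (astar k) * X = σ k • Matrix.vecMulVec (u k) (v k)) :
    frobNorm (Wstar - ∑ k ∈ Finset.Icc 1 r, Matrix.vecMulVec (b k) (a k))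
      ≤ (1 / σmin) * ((∑ k ∈ Finset.Icc (r + 1) rstar, σ k)
          + ∑ k ∈ Finset.Icc 1 r,
              frobNorm (Matrix.vecMulVec (b k) (a k) * X
                - Matrix.vecMulVec (bstar k) (astar k) * X)) := by
  have hresidual : (Wstar - ∑ k ∈ Finset.Icc 1 r, vecMulVec (b k) (a k)) * X
      = ∑ k ∈ Finset.Icc (r + 1) rstar, σ k • vecMulVec (u k) (v k)
        - ∑ k ∈ Finset.Icc 1 r,
            (vecMulVec (b k) (a k) * X - vecMulVec (bstar k) (astar k) * X) := by
    rw [Matrix.sub_mul, hSVD, ← Finset.sum_Icc_one_add_sum_Icc_succ _ hr, Matrix.sum_mul,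
      Finset.sum_sub_distrib, ← Finset.sum_congr rfl hstar]
    abel
  have htail : ∀ k ∈ Finset.Icc (r + 1) rstar, ‖σ k • vecMulVec (u k) (v k)‖ = σ k := by
    intro k hk
    have hk' : k ∈ Finset.Icc 1 rstar := by simp only [Finset.mem_Icc] at hk ⊢; omega
    rw [norm_smul, frobenius_norm_vecMulVec,
      EuclideanSpace.norm_toLp_eq_one_of_dotProduct_self (by simpa using huon k hk' k hk'),
      EuclideanSpace.norm_toLp_eq_one_of_dotProduct_self (by simpa using hvon k hk' k hk'),
      Real.norm_of_nonneg (hσpos k hk').le, mul_one, mul_one]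
  have hX : ∀ w, σmin * ‖toLp 2 w‖ ≤ ‖toLp 2 (w ᵥ* X)‖ := by
    simpa only [euclNorm_eq_norm] using hσminX
  simp only [frobNorm_eq_norm]
  rw [one_div, inv_mul_eq_div, le_div_iff₀' hσmin0]
  calc σmin * ‖Wstar - ∑ k ∈ Finset.Icc 1 r, vecMulVec (b k) (a k)‖
      ≤ ‖(Wstar - ∑ k ∈ Finset.Icc 1 r, vecMulVec (b k) (a k)) * X‖ :=
        mul_frobenius_norm_le_frobenius_norm_mul hσmin0.le hX _
    _ ≤ _ := by
        rw [hresidual]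
        exact (norm_sub_le _ _).trans <| add_le_add
          ((norm_sum_le _ _).trans_eq (Finset.sum_congr rfl htail)) (norm_sum_le _ _)

/-- **Noiseless estimation bound.**
If `Y = W* X` with `rank(W*) = r*` (exhibited by an SVD `Y = Σ_{k=1}^{r*} σ_k* u_k* v_k*ᵀ`
with orthonormal families and positive singular values) and `σ_min(X) > 0` (i.e. `σmin > 0`
satisfies `σmin ‖w‖ ≤ ‖wᵀX‖` for every row vector `w`), then after `L` rounds of parallel
rank-1 deflation with `r` components,
`‖W* - Σ_{k=1}^r b_{k,L} a_{k,L}ᵀ‖_F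
   ≤ (1/σ_min(X)) (Σ_{k=r+1}^{r*} σ_k* + Σ_{k=1}^r G_{k,L})`,
where `G_{k,L} = ‖b_{k,L} a_{k,L}ᵀ X - b_k* a_k*ᵀ X‖_F` and the ideal component satisfies
`b_k* a_k*ᵀ X = σ_k* u_k* v_k*ᵀ`. -/
theorem noiseless_estimation_bound
    (m d n r rstar : ℕ) (hr : r ≤ rstar)
    (X : Matrix (Fin d) (Fin n) ℝ) (Wstar : Matrix (Fin m) (Fin d) ℝ)
    (σmin : ℝ) (σ : ℕ → ℝ) (u : ℕ → Fin m → ℝ) (v : ℕ → Fin n → ℝ)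
    (a : ℕ → Fin d → ℝ) (b : ℕ → Fin m → ℝ)          -- iterates (a_{k,L}, b_{k,L})
    (astar : ℕ → Fin d → ℝ) (bstar : ℕ → Fin m → ℝ)  -- ideal components
    -- smallest singular value of X is positive
    (hσmin0 : 0 < σmin)
    (hσminX : ∀ w : Fin d → ℝ, σmin * euclNorm w ≤ euclNorm (Matrix.vecMul w X))
    -- SVD of Y = W*X exhibiting rank(W*X) = r*
    (hSVD : Wstar * X = ∑ k ∈ Finset.Icc 1 rstar, σ k • Matrix.vecMulVec (u k) (v k))
    (hσpos : ∀ k ∈ Finset.Icc 1 rstar, 0 < σ k)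
    (hσdec : ∀ k ∈ Finset.Icc 1 rstar, ∀ k' ∈ Finset.Icc 1 rstar, k < k' → σ k' < σ k)
    (huon : ∀ j ∈ Finset.Icc 1 rstar, ∀ k ∈ Finset.Icc 1 rstar,
      dotProduct (u j) (u k) = if j = k then 1 else 0)
    (hvon : ∀ j ∈ Finset.Icc 1 rstar, ∀ k ∈ Finset.Icc 1 rstar,
      dotProduct (v j) (v k) = if j = k then 1 else 0)
    -- the ideal components are the leading singular components of Y
    (hstar : ∀ k ∈ Finset.Icc 1 r,
      Matrix.vecMulVec (bstar k) (astar k) * X = σ k • Matrix.vecMulVec (u k) (v k)) :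
    frobNorm (Wstar - ∑ k ∈ Finset.Icc 1 r, Matrix.vecMulVec (b k) (a k))
      ≤ (1 / σmin) * ((∑ k ∈ Finset.Icc (r + 1) rstar, σ k)
          + ∑ k ∈ Finset.Icc 1 r,
              frobNorm (Matrix.vecMulVec (b k) (a k) * X
                - Matrix.vecMulVec (bstar k) (astar k) * X)) :=
  noiseless_estimation_bound_general m d n r rstar hr X Wstar σmin σ u v a b astar bstar hσmin0
    hσminX hSVD hσpos huon hvon hstar
end

section
/- Singular-direction perturbation step: let M* ∈ ℝ^{m×n} have leading singular triplet (σ, u*, v*) with spectral gap T := min{min_{j≥2} |σ - σ_j(M*)|, σ} > 0, and let M be a matrix with ‖M - M*‖_2 < T/2 and unique top singular vectors (u, v). Then ‖u* v*ᵀ - u vᵀ‖_F ≤ (2√2 / T) ‖M* - M‖_F ≤ (3/T) ‖M* - M‖_F. -/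
open Matrix

/-- Spectral (ℓ₂ operator) norm of a real matrix. -/
noncomputable def specNorm {m n : ℕ} (A : Matrix (Fin m) (Fin n) ℝ) : ℝ :=
  sSup {c : ℝ | ∃ x : Fin n → ℝ, euclNorm x ≤ 1 ∧ c = euclNorm (A.mulVec x)}

namespace SDP

lemma euclNorm_nonneg {n : ℕ} (x : Fin n → ℝ) : 0 ≤ euclNorm x := Real.sqrt_nonneg _

lemma frobNorm_nonneg {m n : ℕ} (A : Matrix (Fin m) (Fin n) ℝ) : 0 ≤ frobNorm A :=
  Real.sqrt_nonneg _

lemma sq_euclNorm {n : ℕ} (x : Fin n → ℝ) : euclNorm x ^ 2 = ∑ i, x i ^ 2 :=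
  Real.sq_sqrt (Finset.sum_nonneg fun _ _ => sq_nonneg _)

lemma sq_frobNorm {m n : ℕ} (A : Matrix (Fin m) (Fin n) ℝ) :
    frobNorm A ^ 2 = ∑ i, ∑ j, A i j ^ 2 :=
  Real.sq_sqrt (Finset.sum_nonneg fun _ _ => Finset.sum_nonneg fun _ _ => sq_nonneg _)

lemma euclNorm_le {n : ℕ} {x : Fin n → ℝ} {c : ℝ} (hc : 0 ≤ c)
    (h : ∑ i, x i ^ 2 ≤ c ^ 2) : euclNorm x ≤ c := by
  calc euclNorm x = Real.sqrt (∑ i, x i ^ 2) := rfl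
    _ ≤ Real.sqrt (c ^ 2) := Real.sqrt_le_sqrt h
    _ = c := Real.sqrt_sq hc

lemma sum_sq_eq_one {n : ℕ} {x : Fin n → ℝ} (h : euclNorm x = 1) : ∑ i, x i ^ 2 = 1 := by
  have h2 := sq_euclNorm x
  rw [h, one_pow] at h2
  exact h2.symm

lemma abs_dot_le {n : ℕ} (x y : Fin n → ℝ) :
    |∑ i, x i * y i| ≤ euclNorm x * euclNorm y := by
  have h := Finset.sum_mul_sq_le_sq_mul_sq Finset.univ x y
  have h1 : |∑ i, x i * y i| = Real.sqrt ((∑ i, x i * y i) ^ 2) :=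
    (Real.sqrt_sq_eq_abs _).symm
  rw [h1]
  have h2 : euclNorm x * euclNorm y
      = Real.sqrt ((∑ i, x i ^ 2) * (∑ i, y i ^ 2)) := by
    rw [Real.sqrt_mul (Finset.sum_nonneg fun _ _ => sq_nonneg _)]
    rfl
  rw [h2]
  exact Real.sqrt_le_sqrt h

lemma dot_le {n : ℕ} (x y : Fin n → ℝ) :
    ∑ i, x i * y i ≤ euclNorm x * euclNorm y :=
  le_trans (le_abs_self _) (abs_dot_le x y)

lemma euclNorm_smul {n : ℕ} (c : ℝ) (x : Fin n → ℝ) :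
    euclNorm (c • x) = |c| * euclNorm x := by
  unfold euclNorm
  simp only [Pi.smul_apply, smul_eq_mul, mul_pow]
  rw [← Finset.mul_sum, Real.sqrt_mul (sq_nonneg c), Real.sqrt_sq_eq_abs]

lemma euclNorm_add_le {n : ℕ} (x y : Fin n → ℝ) :
    euclNorm (x + y) ≤ euclNorm x + euclNorm y := by
  have hx := sq_euclNorm x
  have hy := sq_euclNorm y
  have hd := dot_le x y
  apply euclNorm_le (add_nonneg (euclNorm_nonneg x) (euclNorm_nonneg y))
  have hexp : ∑ i, (x + y) i ^ 2
      = (∑ i, x i ^ 2) + 2 * (∑ i, x i * y i) + ∑ i, y i ^ 2 := by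
    simp only [Pi.add_apply, add_sq, Finset.sum_add_distrib, Finset.mul_sum, mul_assoc]
  rw [hexp]
  nlinarith [euclNorm_nonneg x, euclNorm_nonneg y]

lemma euclNorm_sub_le {n : ℕ} (x y : Fin n → ℝ) :
    euclNorm (x - y) ≤ euclNorm x + euclNorm y := by
  have h := euclNorm_add_le x (-y)
  have hneg : euclNorm (-y) = euclNorm y := by
    unfold euclNorm; simp
  rw [hneg] at h
  simpa [sub_eq_add_neg] using h

lemma euclNorm_mulVec_le_frob {m n : ℕ} (A : Matrix (Fin m) (Fin n) ℝ) (v : Fin n → ℝ) :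
    euclNorm (A.mulVec v) ≤ frobNorm A * euclNorm v := by
  apply euclNorm_le (mul_nonneg (frobNorm_nonneg A) (euclNorm_nonneg v))
  have key : ∀ i, (A.mulVec v) i ^ 2 ≤ (∑ j, A i j ^ 2) * (∑ j, v j ^ 2) := by
    intro i
    simpa [Matrix.mulVec, dotProduct] using
      Finset.sum_mul_sq_le_sq_mul_sq Finset.univ (A i) v
  calc ∑ i, (A.mulVec v) i ^ 2
      ≤ ∑ i, (∑ j, A i j ^ 2) * (∑ j, v j ^ 2) := Finset.sum_le_sum fun i _ => key i
    _ = (∑ i, ∑ j, A i j ^ 2) * (∑ j, v j ^ 2) := by rw [Finset.sum_mul]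
    _ = (frobNorm A * euclNorm v) ^ 2 := by
        rw [mul_pow, sq_frobNorm, sq_euclNorm]

lemma specNorm_bddAbove {m n : ℕ} (A : Matrix (Fin m) (Fin n) ℝ) :
    BddAbove {c : ℝ | ∃ x : Fin n → ℝ, euclNorm x ≤ 1 ∧ c = euclNorm (A.mulVec x)} := by
  refine ⟨frobNorm A, ?_⟩
  rintro c ⟨x, hx, rfl⟩
  calc euclNorm (A.mulVec x) ≤ frobNorm A * euclNorm x := euclNorm_mulVec_le_frob A x
    _ ≤ frobNorm A * 1 := mul_le_mul_of_nonneg_left hx (frobNorm_nonneg A)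
    _ = frobNorm A := mul_one _

lemma euclNorm_zero {n : ℕ} : euclNorm (0 : Fin n → ℝ) = 0 := by
  unfold euclNorm; simp

lemma zero_mem_specSet {m n : ℕ} (A : Matrix (Fin m) (Fin n) ℝ) :
    (0 : ℝ) ∈ {c : ℝ | ∃ x : Fin n → ℝ, euclNorm x ≤ 1 ∧ c = euclNorm (A.mulVec x)} := by
  refine ⟨0, ?_, ?_⟩
  · rw [euclNorm_zero]; norm_num
  · rw [Matrix.mulVec_zero, euclNorm_zero]

lemma specNorm_nonneg {m n : ℕ} (A : Matrix (Fin m) (Fin n) ℝ) : 0 ≤ specNorm A :=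
  le_csSup (specNorm_bddAbove A) (zero_mem_specSet A)

lemma euclNorm_eq_zero {n : ℕ} {x : Fin n → ℝ} (h : euclNorm x = 0) : x = 0 := by
  have h2 := sq_euclNorm x
  rw [h] at h2
  have hsum : ∑ i, x i ^ 2 = 0 := by simpa using h2.symm
  funext i
  have := (Finset.sum_eq_zero_iff_of_nonneg (fun j _ => sq_nonneg (x j))).mp hsum i
    (Finset.mem_univ i)
  have := pow_eq_zero_iff (n := 2) (by norm_num) |>.mp this
  simpa using this

lemma euclNorm_mulVec_le {m n : ℕ} (A : Matrix (Fin m) (Fin n) ℝ) (x : Fin n → ℝ) :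
    euclNorm (A.mulVec x) ≤ specNorm A * euclNorm x := by
  rcases eq_or_lt_of_le (euclNorm_nonneg x) with h0 | hpos
  · rw [euclNorm_eq_zero h0.symm, Matrix.mulVec_zero, euclNorm_zero]
    exact mul_nonneg (specNorm_nonneg A) (euclNorm_nonneg _)
  · set c := euclNorm x with hc
    have hy : euclNorm (c⁻¹ • x) = 1 := by
      rw [euclNorm_smul, abs_of_pos (inv_pos.mpr hpos), ← hc, inv_mul_cancel₀ (ne_of_gt hpos)]
    have hmem : euclNorm (A.mulVec (c⁻¹ • x))
        ∈ {c : ℝ | ∃ x : Fin n → ℝ, euclNorm x ≤ 1 ∧ c = euclNorm (A.mulVec x)} :=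
      ⟨c⁻¹ • x, le_of_eq hy, rfl⟩
    have hle := le_csSup (specNorm_bddAbove A) hmem
    rw [Matrix.mulVec_smul, euclNorm_smul, abs_of_pos (inv_pos.mpr hpos)] at hle
    calc euclNorm (A.mulVec x) = c * (c⁻¹ * euclNorm (A.mulVec x)) := by
          field_simp
      _ ≤ c * specNorm A := mul_le_mul_of_nonneg_left hle (le_of_lt hpos)
      _ = specNorm A * c := mul_comm _ _

lemma specNorm_le {m n : ℕ} {A : Matrix (Fin m) (Fin n) ℝ} {c : ℝ}
    (h : ∀ x : Fin n → ℝ, euclNorm x ≤ 1 → euclNorm (A.mulVec x) ≤ c) :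
    specNorm A ≤ c := by
  apply csSup_le ⟨0, zero_mem_specSet A⟩
  rintro b ⟨x, hx, rfl⟩
  exact h x hx

lemma dot_mulVec {m n : ℕ} (A : Matrix (Fin m) (Fin n) ℝ) (x : Fin m → ℝ) (y : Fin n → ℝ) :
    ∑ i, x i * (A.mulVec y) i = ∑ j, (Aᵀ.mulVec x) j * y j := by
  simp only [Matrix.mulVec, dotProduct, Matrix.transpose_apply, Finset.mul_sum,
    Finset.sum_mul]
  rw [Finset.sum_comm]
  apply Finset.sum_congr rfl
  intro j _
  apply Finset.sum_congr rfl
  intro i _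
  ring

lemma specNorm_transpose_le {m n : ℕ} (A : Matrix (Fin m) (Fin n) ℝ) :
    specNorm Aᵀ ≤ specNorm A := by
  apply specNorm_le
  intro x hx
  set t := euclNorm (Aᵀ.mulVec x) with ht
  have htn : 0 ≤ t := euclNorm_nonneg _
  rcases eq_or_lt_of_le htn with h0 | hpos
  · rw [← h0]; exact specNorm_nonneg A
  · have hsq : t ^ 2 = ∑ j, (Aᵀ.mulVec x) j * (Aᵀ.mulVec x) j := by
      rw [ht, sq_euclNorm]
      exact Finset.sum_congr rfl fun j _ => sq (Aᵀ.mulVec x j) ▸ by ring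
    have hswap : ∑ j, (Aᵀ.mulVec x) j * (Aᵀ.mulVec x) j
        = ∑ i, x i * (A.mulVec (Aᵀ.mulVec x)) i := (dot_mulVec A x (Aᵀ.mulVec x)).symm
    have hbound : ∑ i, x i * (A.mulVec (Aᵀ.mulVec x)) i
        ≤ euclNorm x * (specNorm A * t) := by
      calc ∑ i, x i * (A.mulVec (Aᵀ.mulVec x)) i
          ≤ euclNorm x * euclNorm (A.mulVec (Aᵀ.mulVec x)) := dot_le _ _
        _ ≤ euclNorm x * (specNorm A * t) := by
            apply mul_le_mul_of_nonneg_left _ (euclNorm_nonneg x)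
            exact euclNorm_mulVec_le A _
    have h1 : t ^ 2 ≤ 1 * (specNorm A * t) := by
      rw [hsq, hswap]
      calc ∑ i, x i * (A.mulVec (Aᵀ.mulVec x)) i ≤ euclNorm x * (specNorm A * t) := hbound
        _ ≤ 1 * (specNorm A * t) := by
            apply mul_le_mul_of_nonneg_right hx
            exact mul_nonneg (specNorm_nonneg A) htn
    rw [one_mul] at h1
    have : t * t ≤ specNorm A * t := by nlinarith
    exact le_of_mul_le_mul_right (by nlinarith) hpos

lemma frobNorm_transpose {m n : ℕ} (A : Matrix (Fin m) (Fin n) ℝ) :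
    frobNorm Aᵀ = frobNorm A := by
  unfold frobNorm
  rw [Finset.sum_comm]
  rfl

lemma frobNorm_sub_comm {m n : ℕ} (A B : Matrix (Fin m) (Fin n) ℝ) :
    frobNorm (A - B) = frobNorm (B - A) := by
  unfold frobNorm
  congr 1
  apply Finset.sum_congr rfl
  intro i _
  apply Finset.sum_congr rfl
  intro j _
  simp only [Matrix.sub_apply]
  ring

lemma vecMulVec_mulVec {m n : ℕ} (x : Fin m → ℝ) (y z : Fin n → ℝ) :
    (Matrix.vecMulVec x y).mulVec z = (∑ j, y j * z j) • x := by
  funext i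
  simp only [Matrix.mulVec, dotProduct, Matrix.vecMulVec_apply, Pi.smul_apply,
    smul_eq_mul, mul_assoc, ← Finset.mul_sum]
  ring

lemma vecMulVec_transpose' {m n : ℕ} (x : Fin m → ℝ) (y : Fin n → ℝ) :
    (Matrix.vecMulVec x y)ᵀ = Matrix.vecMulVec y x := by
  funext i j
  simp only [Matrix.transpose_apply, Matrix.vecMulVec_apply]
  ring

end SDP

open SDP

set_option maxHeartbeats 2000000

/-- **Singular-direction perturbation step.**
Let `M*` have leading singular triplet `(σ, u*, v*)` with spectral gap
`T = min {σ - σ₂(M*), σ} > 0` (here `σ₂(M*) = ‖M* - σ u* v*ᵀ‖₂` is the second singular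
value), and let `M` be a matrix with `‖M - M*‖₂ < T/2` and (unique) top singular vectors
`(u, v)`.  Then `‖u* v*ᵀ - u vᵀ‖_F ≤ (2√2/T) ‖M* - M‖_F ≤ (3/T) ‖M* - M‖_F`. -/
theorem singular_direction_perturbation
    (m n : ℕ) (Mstar M : Matrix (Fin m) (Fin n) ℝ)
    (σ T : ℝ) (ustar u : Fin m → ℝ) (vstar v : Fin n → ℝ)
    (hustar : euclNorm ustar = 1) (hvstar : euclNorm vstar = 1)
    (hu : euclNorm u = 1) (hv : euclNorm v = 1)
    -- (σ, u*, v*) is the leading singular triplet of M*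
    (hσtop : σ = specNorm Mstar)
    (hMv : Mstar.mulVec vstar = σ • ustar)
    (hMTu : Mstar.transpose.mulVec ustar = σ • vstar)
    -- T = min{min_{j≥2} |σ - σ_j(M*)|, σ} = min{σ - σ₂(M*), σ}
    (hT : T = min (σ - specNorm (Mstar - σ • Matrix.vecMulVec ustar vstar)) σ)
    (hTpos : 0 < T)
    -- (u, v) are the top singular vectors of M
    (hMv' : M.mulVec v = specNorm M • u)
    (hMTu' : M.transpose.mulVec u = specNorm M • v)
    -- perturbation condition
    (hpert : specNorm (M - Mstar) < T / 2) :
    frobNorm (Matrix.vecMulVec ustar vstar - Matrix.vecMulVec u v)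
        ≤ (2 * Real.sqrt 2 / T) * frobNorm (Mstar - M)
    ∧ frobNorm (Matrix.vecMulVec ustar vstar - Matrix.vecMulVec u v)
        ≤ (3 / T) * frobNorm (Mstar - M) := by
  classical
  set E : Matrix (Fin m) (Fin n) ℝ := Mstar - σ • Matrix.vecMulVec ustar vstar with hE
  set σ' : ℝ := specNorm M with hσ'def
  set σ₂ : ℝ := specNorm E with hσ₂def
  set Δ : Matrix (Fin m) (Fin n) ℝ := M - Mstar with hΔdef
  set ε : ℝ := frobNorm (Mstar - M) with hεdef
  set ε₂ : ℝ := specNorm Δ with hε₂def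
  set a : ℝ := ∑ i, ustar i * u i with ha
  set b : ℝ := ∑ j, vstar j * v j with hb
  set p : Fin m → ℝ := u - a • ustar with hpdef
  set q : Fin n → ℝ := v - b • vstar with hqdef
  set X : ℝ := euclNorm p with hXdef
  set Y : ℝ := euclNorm q with hYdef
  clear_value E σ' σ₂ Δ ε ε₂ a b p q X Y
  -- basic sums
  have hU : ∑ i, ustar i ^ 2 = 1 := sum_sq_eq_one hustar
  have hV : ∑ j, vstar j ^ 2 = 1 := sum_sq_eq_one hvstar
  have hu2 : ∑ i, u i ^ 2 = 1 := sum_sq_eq_one hu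
  have hv2 : ∑ j, v j ^ 2 = 1 := sum_sq_eq_one hv
  have hUu : ∑ i, ustar i * ustar i = 1 := by simpa [pow_two] using hU
  have hVv : ∑ j, vstar j * vstar j = 1 := by simpa [pow_two] using hV
  -- basic positivity
  have hσT : T ≤ σ := by rw [hT]; exact min_le_right _ _
  have hσ₂T : T ≤ σ - σ₂ := by rw [hT]; exact min_le_left _ _
  have hσpos : 0 < σ := lt_of_lt_of_le hTpos hσT
  have hσ₂0 : 0 ≤ σ₂ := by rw [hσ₂def]; exact specNorm_nonneg E
  have hσ'0 : 0 ≤ σ' := by rw [hσ'def]; exact specNorm_nonneg M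
  have hε₂T : ε₂ < T / 2 := hpert
  have hε0 : 0 ≤ ε := by rw [hεdef]; exact frobNorm_nonneg _
  have hε₂0 : 0 ≤ ε₂ := by rw [hε₂def]; exact specNorm_nonneg Δ
  have hXnn : 0 ≤ X := by rw [hXdef]; exact euclNorm_nonneg p
  have hYnn : 0 ≤ Y := by rw [hYdef]; exact euclNorm_nonneg q
  -- spectral triangle inequality: σ ≤ σ' + ε₂
  have hσle : σ ≤ σ' + ε₂ := by
    rw [hσtop]
    apply specNorm_le
    intro x hx
    have hsplit : Mstar.mulVec x = M.mulVec x - Δ.mulVec x := by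
      rw [hΔdef, Matrix.sub_mulVec]; abel
    rw [hsplit]
    calc euclNorm (M.mulVec x - Δ.mulVec x)
        ≤ euclNorm (M.mulVec x) + euclNorm (Δ.mulVec x) := euclNorm_sub_le _ _
      _ ≤ σ' * euclNorm x + ε₂ * euclNorm x := by
          rw [hσ'def, hε₂def]
          exact add_le_add (euclNorm_mulVec_le M x) (euclNorm_mulVec_le Δ x)
      _ ≤ σ' * 1 + ε₂ * 1 :=
          add_le_add (mul_le_mul_of_nonneg_left hx hσ'0)
            (mul_le_mul_of_nonneg_left hx hε₂0)
      _ = σ' + ε₂ := by ring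
  -- E annihilates the top singular pair
  have hEvstar : E.mulVec vstar = 0 := by
    rw [hE, Matrix.sub_mulVec, hMv, Matrix.smul_mulVec, vecMulVec_mulVec, hVv]
    simp
  have hET : Eᵀ = Mstarᵀ - σ • Matrix.vecMulVec vstar ustar := by
    rw [hE, Matrix.transpose_sub, Matrix.transpose_smul, vecMulVec_transpose']
  have hETustar : Eᵀ.mulVec ustar = 0 := by
    rw [hET, Matrix.sub_mulVec, hMTu, Matrix.smul_mulVec, vecMulVec_mulVec, hUu]
    simp
  have hdotuE : ∀ z : Fin n → ℝ, ∑ i, ustar i * (E.mulVec z) i = 0 := by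
    intro z
    rw [dot_mulVec, hETustar]
    simp
  have hEqv : E.mulVec q = E.mulVec v := by
    rw [hqdef, Matrix.mulVec_sub, Matrix.mulVec_smul, hEvstar]
    simp
  have hEqp : Eᵀ.mulVec p = Eᵀ.mulVec u := by
    rw [hpdef, Matrix.mulVec_sub, Matrix.mulVec_smul, hETustar]
    simp
  have hMsv : Mstar.mulVec v = E.mulVec v + (σ * b) • ustar := by
    rw [hE, Matrix.sub_mulVec, Matrix.smul_mulVec, vecMulVec_mulVec, ← hb, smul_smul]
    abel
  have hMsTu : Mstarᵀ.mulVec u = Eᵀ.mulVec u + (σ * a) • vstar := by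
    rw [hET, Matrix.sub_mulVec, Matrix.smul_mulVec, vecMulVec_mulVec, ← ha, smul_smul]
    abel
  have hMsum : M.mulVec v = Mstar.mulVec v + Δ.mulVec v := by
    rw [hΔdef, Matrix.sub_mulVec]; abel
  have hMTsum : Mᵀ.mulVec u = Mstarᵀ.mulVec u + Δᵀ.mulVec u := by
    rw [hΔdef, Matrix.transpose_sub, Matrix.sub_mulVec]; abel
  -- residual scalars
  set ρ₁ : ℝ := ∑ i, ustar i * (Δ.mulVec v) i with hρ₁
  set ρ₂ : ℝ := ∑ j, vstar j * (Δᵀ.mulVec u) j with hρ₂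
  set w : Fin m → ℝ := Δ.mulVec v - ρ₁ • ustar with hwdef
  set w' : Fin n → ℝ := Δᵀ.mulVec u - ρ₂ • vstar with hw'def
  clear_value ρ₁ ρ₂ w w'
  -- f5 : σ' * a = σ * b + ρ₁
  have f5 : σ' * a = σ * b + ρ₁ := by
    have lhs : ∑ i, ustar i * (M.mulVec v) i = σ' * a := by
      rw [hMv']
      simp only [Pi.smul_apply, smul_eq_mul]
      rw [ha, Finset.mul_sum]
      exact Finset.sum_congr rfl fun i _ => by ring
    have rhs : ∑ i, ustar i * (M.mulVec v) i = σ * b + ρ₁ := by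
      rw [hMsum]
      simp only [Pi.add_apply, mul_add, Finset.sum_add_distrib]
      congr 1
      · rw [dot_mulVec, hMTu]
        simp only [Pi.smul_apply, smul_eq_mul]
        rw [hb, Finset.mul_sum]
        exact Finset.sum_congr rfl fun j _ => by ring
      · exact hρ₁.symm
    rw [← lhs, rhs]
  have f5' : σ' * b = σ * a + ρ₂ := by
    have lhs : ∑ j, vstar j * (Mᵀ.mulVec u) j = σ' * b := by
      rw [hMTu']
      simp only [Pi.smul_apply, smul_eq_mul]
      rw [hb, Finset.mul_sum]
      exact Finset.sum_congr rfl fun j _ => by ring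
    have rhs : ∑ j, vstar j * (Mᵀ.mulVec u) j = σ * a + ρ₂ := by
      rw [hMTsum]
      simp only [Pi.add_apply, mul_add, Finset.sum_add_distrib]
      congr 1
      · rw [dot_mulVec, Matrix.transpose_transpose, hMv]
        simp only [Pi.smul_apply, smul_eq_mul]
        rw [ha, Finset.mul_sum]
        exact Finset.sum_congr rfl fun i _ => by ring
      · exact hρ₂.symm
    rw [← lhs, rhs]
  -- key identities
  have hkey : σ' • p = E.mulVec q + w := by
    rw [hEqv, hwdef, hpdef, smul_sub, smul_smul, ← hMv', hMsum, hMsv, f5, add_smul]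
    abel
  have hkey' : σ' • q = Eᵀ.mulVec p + w' := by
    rw [hEqp, hw'def, hqdef, smul_sub, smul_smul, ← hMTu', hMTsum, hMsTu, f5', add_smul]
    abel
  -- norms of residuals
  have hΔv_frob : euclNorm (Δ.mulVec v) ≤ ε := by
    calc euclNorm (Δ.mulVec v) ≤ frobNorm Δ * euclNorm v := euclNorm_mulVec_le_frob _ _
      _ = frobNorm Δ := by rw [hv, mul_one]
      _ = ε := by rw [hΔdef, frobNorm_sub_comm, ← hεdef]
  have hΔv_spec : euclNorm (Δ.mulVec v) ≤ ε₂ := by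
    calc euclNorm (Δ.mulVec v) ≤ specNorm Δ * euclNorm v := euclNorm_mulVec_le _ _
      _ = ε₂ := by rw [hv, mul_one, ← hε₂def]
  have hΔTu_frob : euclNorm (Δᵀ.mulVec u) ≤ ε := by
    calc euclNorm (Δᵀ.mulVec u) ≤ frobNorm Δᵀ * euclNorm u := euclNorm_mulVec_le_frob _ _
      _ = frobNorm Δᵀ := by rw [hu, mul_one]
      _ = frobNorm Δ := frobNorm_transpose Δ
      _ = ε := by rw [hΔdef, frobNorm_sub_comm, ← hεdef]
  have hw_le : euclNorm w ≤ ε := by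
    have hterm : ∀ i, w i ^ 2
        = (Δ.mulVec v) i ^ 2 - 2 * ρ₁ * (ustar i * (Δ.mulVec v) i) + ρ₁ ^ 2 * ustar i ^ 2 := by
      intro i; rw [hwdef]; simp only [Pi.sub_apply, Pi.smul_apply, smul_eq_mul]; ring
    have hw2 : ∑ i, w i ^ 2 = (∑ i, (Δ.mulVec v) i ^ 2) - ρ₁ ^ 2 := by
      rw [Finset.sum_congr rfl fun i _ => hterm i, Finset.sum_add_distrib,
        Finset.sum_sub_distrib, ← Finset.mul_sum, ← Finset.mul_sum, ← hρ₁, hU]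
      ring
    apply euclNorm_le hε0
    rw [hw2]
    have h1 : ∑ i, (Δ.mulVec v) i ^ 2 ≤ ε ^ 2 := by
      nlinarith only [sq_euclNorm (Δ.mulVec v), euclNorm_nonneg (Δ.mulVec v), hΔv_frob]
    linarith only [h1, sq_nonneg ρ₁]
  have hw'_le : euclNorm w' ≤ ε := by
    have hterm : ∀ j, w' j ^ 2
        = (Δᵀ.mulVec u) j ^ 2 - 2 * ρ₂ * (vstar j * (Δᵀ.mulVec u) j) + ρ₂ ^ 2 * vstar j ^ 2 := by
      intro j; rw [hw'def]; simp only [Pi.sub_apply, Pi.smul_apply, smul_eq_mul]; ring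
    have hw2 : ∑ j, w' j ^ 2 = (∑ j, (Δᵀ.mulVec u) j ^ 2) - ρ₂ ^ 2 := by
      rw [Finset.sum_congr rfl fun j _ => hterm j, Finset.sum_add_distrib,
        Finset.sum_sub_distrib, ← Finset.mul_sum, ← Finset.mul_sum, ← hρ₂, hV]
      ring
    apply euclNorm_le hε0
    rw [hw2]
    have h1 : ∑ j, (Δᵀ.mulVec u) j ^ 2 ≤ ε ^ 2 := by
      nlinarith only [sq_euclNorm (Δᵀ.mulVec u), euclNorm_nonneg (Δᵀ.mulVec u), hΔTu_frob]
    linarith only [h1, sq_nonneg ρ₂]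
  -- the two coupled inequalities
  have f8 : σ' * X ≤ σ₂ * Y + ε := by
    have h1 : euclNorm (σ' • p) = σ' * X := by
      rw [euclNorm_smul, abs_of_nonneg hσ'0, ← hXdef]
    rw [← h1, hkey]
    have h2 : euclNorm (E.mulVec q) ≤ σ₂ * Y := by
      calc euclNorm (E.mulVec q) ≤ specNorm E * euclNorm q := euclNorm_mulVec_le _ _
        _ = σ₂ * Y := by rw [← hσ₂def, ← hYdef]
    calc euclNorm (E.mulVec q + w) ≤ euclNorm (E.mulVec q) + euclNorm w := euclNorm_add_le _ _
      _ ≤ σ₂ * Y + ε := add_le_add h2 hw_le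
  have f9 : σ' * Y ≤ σ₂ * X + ε := by
    have h1 : euclNorm (σ' • q) = σ' * Y := by
      rw [euclNorm_smul, abs_of_nonneg hσ'0, ← hYdef]
    rw [← h1, hkey']
    have h2 : euclNorm (Eᵀ.mulVec p) ≤ σ₂ * X := by
      calc euclNorm (Eᵀ.mulVec p) ≤ specNorm Eᵀ * euclNorm p := euclNorm_mulVec_le _ _
        _ ≤ specNorm E * euclNorm p :=
            mul_le_mul_of_nonneg_right (specNorm_transpose_le E) (euclNorm_nonneg p)
        _ = σ₂ * X := by rw [← hσ₂def, ← hXdef]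
    calc euclNorm (Eᵀ.mulVec p + w') ≤ euclNorm (Eᵀ.mulVec p) + euclNorm w' := euclNorm_add_le _ _
      _ ≤ σ₂ * X + ε := add_le_add h2 hw'_le
  -- X² = 1 - a², Y² = 1 - b²
  have hp2 : ∑ i, p i ^ 2 = 1 - a ^ 2 := by
    have hterm : ∀ i, p i ^ 2 = u i ^ 2 - 2 * a * (ustar i * u i) + a ^ 2 * ustar i ^ 2 := by
      intro i; rw [hpdef]; simp only [Pi.sub_apply, Pi.smul_apply, smul_eq_mul]; ring
    rw [Finset.sum_congr rfl fun i _ => hterm i, Finset.sum_add_distrib,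
      Finset.sum_sub_distrib, ← Finset.mul_sum, ← Finset.mul_sum, ← ha, hU, hu2]
    ring
  have hq2 : ∑ j, q j ^ 2 = 1 - b ^ 2 := by
    have hterm : ∀ j, q j ^ 2 = v j ^ 2 - 2 * b * (vstar j * v j) + b ^ 2 * vstar j ^ 2 := by
      intro j; rw [hqdef]; simp only [Pi.sub_apply, Pi.smul_apply, smul_eq_mul]; ring
    rw [Finset.sum_congr rfl fun j _ => hterm j, Finset.sum_add_distrib,
      Finset.sum_sub_distrib, ← Finset.mul_sum, ← Finset.mul_sum, ← hb, hV, hv2]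
    ring
  have X2 : X ^ 2 = 1 - a ^ 2 := by rw [hXdef, sq_euclNorm, hp2]
  have Y2 : Y ^ 2 = 1 - b ^ 2 := by rw [hYdef, sq_euclNorm, hq2]
  have hX1 : X ≤ 1 := by nlinarith only [sq_nonneg a, X2, hXnn]
  have hY1 : Y ≤ 1 := by nlinarith only [sq_nonneg b, Y2, hYnn]
  -- the value relation: σ' = ⟨p,Eq⟩ + σ b a + ⟨u,Δv⟩
  have s1 : ∑ i, u i * (M.mulVec v) i = σ' := by
    rw [hMv']
    simp only [Pi.smul_apply, smul_eq_mul]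
    have hterm : ∀ i, u i * (σ' * u i) = σ' * u i ^ 2 := fun i => by ring
    rw [Finset.sum_congr rfl fun i _ => hterm i, ← Finset.mul_sum, hu2, mul_one]
  have s2 : ∑ i, u i * (Mstar.mulVec v) i
      = (∑ i, p i * (E.mulVec q) i) + σ * b * a := by
    rw [hMsv]
    simp only [Pi.add_apply, Pi.smul_apply, smul_eq_mul, mul_add, Finset.sum_add_distrib]
    congr 1
    · rw [← hEqv]
      have hterm : ∀ i, u i * (E.mulVec q) i
          = p i * (E.mulVec q) i + a * (ustar i * (E.mulVec q) i) := by
        intro i; rw [hpdef]; simp only [Pi.sub_apply, Pi.smul_apply, smul_eq_mul]; ring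
      rw [Finset.sum_congr rfl fun i _ => hterm i, Finset.sum_add_distrib, ← Finset.mul_sum,
        hdotuE q, mul_zero, add_zero]
    · rw [ha, Finset.mul_sum]
      exact Finset.sum_congr rfl fun i _ => by ring
  have s3 : σ' = (∑ i, p i * (E.mulVec q) i) + σ * b * a + ∑ i, u i * (Δ.mulVec v) i := by
    rw [← s1, hMsum]
    simp only [Pi.add_apply, mul_add, Finset.sum_add_distrib]
    rw [s2]
  have habs1 : |∑ i, p i * (E.mulVec q) i| ≤ σ₂ * (X * Y) := by
    calc |∑ i, p i * (E.mulVec q) i| ≤ euclNorm p * euclNorm (E.mulVec q) := abs_dot_le _ _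
      _ ≤ euclNorm p * (specNorm E * euclNorm q) :=
          mul_le_mul_of_nonneg_left (euclNorm_mulVec_le E q) (euclNorm_nonneg p)
      _ = σ₂ * (X * Y) := by rw [← hσ₂def, ← hXdef, ← hYdef]; ring
  have habs2 : |∑ i, u i * (Δ.mulVec v) i| ≤ ε₂ := by
    calc |∑ i, u i * (Δ.mulVec v) i| ≤ euclNorm u * euclNorm (Δ.mulVec v) := abs_dot_le _ _
      _ ≤ 1 * ε₂ := by rw [hu]; exact mul_le_mul_of_nonneg_left hΔv_spec zero_le_one
      _ = ε₂ := one_mul _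
  have f12 : σ' - σ₂ * (X * Y) - ε₂ ≤ σ * (a * b) := by
    have hσab : σ * (a * b)
        = σ' - (∑ i, p i * (E.mulVec q) i) - ∑ i, u i * (Δ.mulVec v) i := by
      rw [s3]; ring
    rw [hσab]
    have h1 := le_abs_self (∑ i, p i * (E.mulVec q) i)
    have h2 := le_abs_self (∑ i, u i * (Δ.mulVec v) i)
    linarith
  have hσ₂XY : σ₂ * (X * Y) ≤ σ₂ := by
    have hXY : X * Y ≤ 1 := by nlinarith only [hX1, hY1, hXnn, hYnn]
    nlinarith only [hXY, hσ₂0]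
  have hab_pos : 0 < a * b := by
    have h1 : 0 < σ * (a * b) := by linarith only [f12, hσle, hσ₂XY, hσ₂T, hε₂T]
    nlinarith only [h1, hσpos]
  -- gap bounds
  have hgap : T - ε₂ ≤ σ' - σ₂ := by linarith only [hσle, hσ₂T]
  have hgap2 : T / 2 < σ' - σ₂ := by linarith only [hgap, hε₂T]
  -- individual bounds on X, Y
  have hσ'σ₂pos : 0 < σ' + σ₂ := by linarith only [hgap2, hTpos, hσ₂0]
  have f11x : X * (σ' - σ₂) ≤ ε := by
    have h1 := mul_le_mul_of_nonneg_left f8 hσ'0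
    have h2 := mul_le_mul_of_nonneg_left f9 hσ₂0
    nlinarith only [h1, h2, hσ'σ₂pos]
  have f11y : Y * (σ' - σ₂) ≤ ε := by
    have h1 := mul_le_mul_of_nonneg_left f9 hσ'0
    have h2 := mul_le_mul_of_nonneg_left f8 hσ₂0
    nlinarith only [h1, h2, hσ'σ₂pos]
  -- Frobenius norm identity
  have hfrob_eq : frobNorm (Matrix.vecMulVec ustar vstar - Matrix.vecMulVec u v)
      = Real.sqrt (2 - 2 * (a * b)) := by
    unfold frobNorm
    congr 1
    have hrow : ∀ i, ∑ j, (Matrix.vecMulVec ustar vstar - Matrix.vecMulVec u v) i j ^ 2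
        = ustar i ^ 2 - 2 * b * (ustar i * u i) + u i ^ 2 := by
      intro i
      have hterm : ∀ j, (Matrix.vecMulVec ustar vstar - Matrix.vecMulVec u v) i j ^ 2
          = ustar i ^ 2 * vstar j ^ 2 - 2 * (ustar i * u i) * (vstar j * v j)
            + u i ^ 2 * v j ^ 2 := by
        intro j
        simp only [Matrix.sub_apply, Matrix.vecMulVec_apply]
        ring
      rw [Finset.sum_congr rfl fun j _ => hterm j, Finset.sum_add_distrib,
        Finset.sum_sub_distrib, ← Finset.mul_sum, ← Finset.mul_sum, ← Finset.mul_sum,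
        ← hb, hV, hv2]
      ring
    rw [Finset.sum_congr rfl fun i _ => hrow i, Finset.sum_add_distrib,
      Finset.sum_sub_distrib, ← Finset.mul_sum, ← ha, hU, hu2]
    ring
  -- the central estimate
  have hab2 : 2 - 2 * (a * b) ≤ 8 * ε ^ 2 / T ^ 2 := by
    rcases le_or_gt ε (σ' - σ₂) with hcase | hcase
    · have hg : (0:ℝ) < σ' - σ₂ := by linarith only [hgap2, hTpos]
      set r : ℝ := ε / (σ' - σ₂) with hrdef
      have hr0 : 0 ≤ r := div_nonneg hε0 (le_of_lt hg)
      have hX' : X ≤ r := by rw [hrdef, le_div_iff₀ hg]; exact f11x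
      have hY' : Y ≤ r := by rw [hrdef, le_div_iff₀ hg]; exact f11y
      have hr1 : r ≤ 1 := by rw [hrdef, div_le_one hg]; exact hcase
      have hr2nn : 0 ≤ 1 - r ^ 2 := by nlinarith only [hr1, hr0]
      have h1 : 1 - r ^ 2 ≤ a ^ 2 := by nlinarith only [X2, hX', hXnn, hr0]
      have h2 : 1 - r ^ 2 ≤ b ^ 2 := by nlinarith only [Y2, hY', hYnn, hr0]
      have h3 : (1 - r ^ 2) * (1 - r ^ 2) ≤ a ^ 2 * b ^ 2 :=
        mul_le_mul h1 h2 hr2nn (sq_nonneg a)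
      have hab_ge : 1 - r ^ 2 ≤ a * b := by nlinarith only [h3, hab_pos, hr2nn]
      have hrT : r * T ≤ 2 * ε := by
        rw [hrdef, div_mul_eq_mul_div, div_le_iff₀ hg]
        nlinarith only [hgap2, hε0]
      have h8 : 2 * r ^ 2 ≤ 8 * ε ^ 2 / T ^ 2 := by
        rw [le_div_iff₀ (by positivity)]
        nlinarith only [hrT, mul_nonneg hr0 hTpos.le, hε0]
      linarith only [hab_ge, h8]
    · have hε_big : T / 2 < ε := lt_trans hgap2 hcase
      have h2 : 2 ≤ 8 * ε ^ 2 / T ^ 2 := by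
        rw [le_div_iff₀ (by positivity)]
        nlinarith only [hε_big, hTpos]
      linarith only [hab_pos, h2]
  -- conclusion
  have hsqrt2 : Real.sqrt 2 ^ 2 = 2 := Real.sq_sqrt (by norm_num)
  have hs2nn : (0:ℝ) ≤ Real.sqrt 2 := Real.sqrt_nonneg 2
  have hRHSnn : 0 ≤ 2 * Real.sqrt 2 / T * ε := by positivity
  have hRHSsq : (2 * Real.sqrt 2 / T * ε) ^ 2 = 8 * ε ^ 2 / T ^ 2 := by
    have hexp : (2 * Real.sqrt 2 / T * ε) ^ 2
        = 2 ^ 2 * Real.sqrt 2 ^ 2 * ε ^ 2 / T ^ 2 := by ring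
    rw [hexp, hsqrt2]; ring
  have goal1 : frobNorm (Matrix.vecMulVec ustar vstar - Matrix.vecMulVec u v)
      ≤ 2 * Real.sqrt 2 / T * ε := by
    rw [hfrob_eq]
    have h1 : 2 - 2 * (a * b) ≤ (2 * Real.sqrt 2 / T * ε) ^ 2 := by rw [hRHSsq]; exact hab2
    calc Real.sqrt (2 - 2 * (a * b))
        ≤ Real.sqrt ((2 * Real.sqrt 2 / T * ε) ^ 2) := Real.sqrt_le_sqrt h1
      _ = 2 * Real.sqrt 2 / T * ε := Real.sqrt_sq hRHSnn
  have hstep : 2 * Real.sqrt 2 / T * ε ≤ 3 / T * ε := by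
    have hs : Real.sqrt 2 ≤ 3 / 2 := by nlinarith only [hsqrt2, hs2nn]
    have hdiv : 2 * Real.sqrt 2 / T ≤ 3 / T := by
      rw [div_le_div_iff_of_pos_right hTpos]
      nlinarith only [hs]
    exact mul_le_mul_of_nonneg_right hdiv hε0
  exact ⟨goal1, le_trans goal1 hstep⟩
end

section
/- Explicit lower Lambert branch bound: for every a ∈ (0, 1/e), the unique y ≤ -1 with y e^y = -a (i.e., y = W_{-1}(-a)) satisfies -W_{-1}(-a) ≤ log(1/a) + log log(1/a) + 1. -/
/-- **Explicit lower Lambert branch bound.**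
For every `a ∈ (0, 1/e)`, the unique `y ≤ -1` with `y e^y = -a` (i.e. `y = W_{-1}(-a)`)
satisfies `-W_{-1}(-a) ≤ log(1/a) + log log(1/a) + 1`. -/
theorem lambert_lower_branch_bound (a y : ℝ)
    (ha0 : 0 < a) (ha : a < 1 / Real.exp 1)
    (hy : y ≤ -1) (hyeq : y * Real.exp y = -a) :
    -y ≤ Real.log (1 / a) + Real.log (Real.log (1 / a)) + 1 := by
  set L := Real.log (1 / a) with hLdef
  set u := -y with hudef
  have hu1 : 1 ≤ u := by simp only [hudef]; linarith
  have hu0 : 0 < u := by linarith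
  have hL1 : 1 < L := by
    rw [hLdef]
    have h1 : Real.exp 1 < 1 / a := by
      rw [lt_div_iff₀ ha0]
      rw [div_eq_mul_inv] at ha
      nlinarith [Real.exp_pos 1, mul_pos ha0 (Real.exp_pos 1),
        mul_inv_cancel₀ (ne_of_gt (Real.exp_pos 1))]
    calc (1 : ℝ) = Real.log (Real.exp 1) := (Real.log_exp 1).symm
    _ < Real.log (1 / a) := Real.log_lt_log (Real.exp_pos 1) h1
  have hL0 : 0 < L := by linarith
  have hLa : L = -Real.log a := by rw [hLdef, one_div, Real.log_inv]
  have hprod : u * Real.exp (-u) = a := by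
    rw [hudef, neg_neg]
    linear_combination -hyeq
  have hlog : Real.log u + (-u) = Real.log a := by
    have := congrArg Real.log hprod
    rwa [Real.log_mul (ne_of_gt hu0) (Real.exp_ne_zero _), Real.log_exp] at this
  have ueq : u = Real.log u + L := by rw [hLa]; linarith
  have hdiv : Real.log u ≤ u / Real.exp 1 := by
    have h := Real.log_le_sub_one_of_pos (div_pos hu0 (Real.exp_pos 1))
    rw [Real.log_div (ne_of_gt hu0) (Real.exp_ne_zero 1), Real.log_exp] at h
    linarith
  have he : (2 : ℝ) < Real.exp 1 := by
    have := Real.exp_one_gt_d9; linarith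
  have hue : u ≤ Real.exp 1 * L := by
    have h2 : (u - L) * Real.exp 1 ≤ u := by
      have h4 : u - L ≤ u / Real.exp 1 := by linarith
      exact (le_div_iff₀ (Real.exp_pos 1)).mp h4
    nlinarith [he, hL1, hu0]
  have hlogu : Real.log u ≤ 1 + Real.log L := by
    have h3 : Real.log u ≤ Real.log (Real.exp 1 * L) := Real.log_le_log hu0 hue
    rwa [Real.log_mul (Real.exp_ne_zero 1) (ne_of_gt hL0), Real.log_exp] at h3
  linarith [ueq, hlogu]
end

section
/- Geometric re-anchoring of the surrogate mismatch: fix k ≥ 1, m_k ∈ (0,1), R > 0, an index ŝ, and a value B̂_ŝ ≤ R, and define the surrogate sequence B̂_ℓ = R for ℓ < ŝ and B̂_ℓ = min{R, m_k^{ℓ-ŝ} (ℓ-ŝ+1) B̂_ŝ} for ℓ ≥ ŝ. If an integer s satisfies s ≥ ŝ, m_k^{s-ŝ} (s-ŝ+1) ≤ 1, and s - ŝ ≥ (k+1) m_k / (1 - m_k), then for every ℓ ≥ s: B̂_ℓ ≤ γ_k^{ℓ-s} B̂_s, where γ_k := 1/(k+1) + (k/(k+1)) m_k. -/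
/-- **Geometric re-anchoring of the surrogate mismatch.**
Fix `k ≥ 1`, `m_k ∈ (0,1)`, `R > 0`, an index `ŝ`, and a (nonnegative) boundary value
`B̂_ŝ ≤ R`, and define the surrogate sequence `B̂_ℓ = R` for `ℓ < ŝ` and
`B̂_ℓ = min {R, m_k^{ℓ-ŝ} (ℓ-ŝ+1) B̂_ŝ}` for `ℓ ≥ ŝ`.  If an integer `s` satisfies
`s ≥ ŝ`, `m_k^{s-ŝ} (s-ŝ+1) ≤ 1`, and `s - ŝ ≥ (k+1) m_k / (1 - m_k)`, then for every
`ℓ ≥ s`, `B̂_ℓ ≤ γ_k^{ℓ-s} B̂_s`, where `γ_k = 1/(k+1) + (k/(k+1)) m_k`. -/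
theorem geometric_reanchoring
    (k : ℕ) (hk : 1 ≤ k) (mk R Bv : ℝ)
    (hm0 : 0 < mk) (hm1 : mk < 1) (hR : 0 < R) (hBv : Bv ≤ R) (hBv0 : 0 ≤ Bv)
    (shat s : ℕ) (Bhat : ℕ → ℝ)
    (hBpre : ∀ ℓ : ℕ, ℓ < shat → Bhat ℓ = R)
    (hBpost : ∀ ℓ : ℕ, shat ≤ ℓ →
      Bhat ℓ = min R (mk ^ (ℓ - shat) * ((ℓ - shat + 1 : ℕ) : ℝ) * Bv))
    (hs1 : shat ≤ s)
    (hs2 : mk ^ (s - shat) * ((s - shat + 1 : ℕ) : ℝ) ≤ 1)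
    (hs3 : ((k : ℝ) + 1) * mk / (1 - mk) ≤ ((s - shat : ℕ) : ℝ)) :
    ∀ ℓ : ℕ, s ≤ ℓ →
      Bhat ℓ ≤ (1 / ((k : ℝ) + 1) + ((k : ℝ) / ((k : ℝ) + 1)) * mk) ^ (ℓ - s) * Bhat s := by
  set γ : ℝ := 1 / ((k : ℝ) + 1) + ((k : ℝ) / ((k : ℝ) + 1)) * mk with hγ
  have hk1 : (0:ℝ) < (k:ℝ) + 1 := by positivity
  have hγ0 : 0 < γ := by
    rw [hγ]; positivity
  set g : ℕ → ℝ := fun n => mk ^ n * ((n + 1 : ℕ) : ℝ) with hg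
  have hgpos : ∀ n, 0 < g n := by
    intro n; simp only [hg]; positivity
  set d := s - shat with hd
  have h1m : (0:ℝ) < 1 - mk := by linarith
  have hd3 : ((k : ℝ) + 1) * mk ≤ ((d:ℕ):ℝ) * (1 - mk) := by
    rw [div_le_iff₀ h1m] at hs3; exact hs3
  -- one-step decay
  have hstep : ∀ n : ℕ, d ≤ n → g (n + 1) ≤ γ * g n := by
    intro n hn
    have hnd : ((d:ℕ):ℝ) ≤ (n:ℝ) := by exact_mod_cast hn
    have hkey : mk * ((n:ℝ) + 2) ≤ γ * ((n:ℝ) + 1) := by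
      have hγeq : γ = (1 + (k:ℝ) * mk) / ((k:ℝ) + 1) := by
        rw [hγ]; field_simp
      rw [hγeq, div_mul_eq_mul_div, le_div_iff₀ hk1]
      have : ((k : ℝ) + 1) * mk ≤ (n:ℝ) * (1 - mk) := le_trans hd3 (by nlinarith)
      nlinarith
    simp only [hg]
    push_cast
    have : mk ^ (n + 1) * ((n:ℝ) + 1 + 1) = mk ^ n * (mk * ((n:ℝ) + 2)) := by ring
    rw [this]
    have hmn : (0:ℝ) < mk ^ n := by positivity
    calc mk ^ n * (mk * ((n:ℝ) + 2)) ≤ mk ^ n * (γ * ((n:ℝ) + 1)) := by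
          exact mul_le_mul_of_nonneg_left hkey (le_of_lt hmn)
      _ = γ * (mk ^ n * ((n:ℝ) + 1)) := by ring
  -- iterate: for j, g (j + d) ≤ γ^j * g d
  have hiter : ∀ j : ℕ, g (j + d) ≤ γ ^ j * g d := by
    intro j
    induction j with
    | zero => simp
    | succ j ih =>
        have h1 : g (j + d + 1) ≤ γ * g (j + d) := hstep _ (by omega)
        calc g (j + 1 + d) = g (j + d + 1) := by ring_nf
          _ ≤ γ * g (j + d) := h1
          _ ≤ γ * (γ ^ j * g d) := by
              exact mul_le_mul_of_nonneg_left ih (le_of_lt hγ0)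
          _ = γ ^ (j + 1) * g d := by ring
  intro ℓ hℓ
  have hshatℓ : shat ≤ ℓ := le_trans hs1 hℓ
  have hBs : Bhat s = g d * Bv := by
    rw [hBpost s hs1]
    have hle : g d * Bv ≤ R := by
      calc g d * Bv ≤ 1 * Bv := mul_le_mul_of_nonneg_right hs2 hBv0
        _ = Bv := one_mul Bv
        _ ≤ R := hBv
    simp only [hg]
    rw [min_eq_right hle]
  have hBℓ : Bhat ℓ = min R (g (ℓ - shat) * Bv) := hBpost ℓ hshatℓ
  have hsplit : ℓ - shat = (ℓ - s) + d := by omega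
  rw [hBℓ, hBs, hsplit]
  calc min R (g ((ℓ - s) + d) * Bv) ≤ g ((ℓ - s) + d) * Bv := min_le_right _ _
    _ ≤ (γ ^ (ℓ - s) * g d) * Bv := by
        exact mul_le_mul_of_nonneg_right (hiter (ℓ - s)) hBv0
    _ = γ ^ (ℓ - s) * (g d * Bv) := by ring
end
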